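/- Let f₁, …, f_k : Config → Config with f_k = id, and consider the forward recurrence C^(t+1) = Σ_{m=0}^{k−1} f_{m+1}(C^(t−m)). Define the inverse recurrence D^(t+1) = −Σ_{m=0}^{k−2} f_{k−m−1}(D^(t−m)) + D^(t−k+1). If (C^(t))_{t≥0} is an evolution of the forward recurrence and one initializes the inverse recurrence with D^(1) = C^(T+1), D^(2) = C^(T), …, D^(k) = C^(T−k+2) for some T ≥ k−1, then D^(k+1) = C^(T−k+1). -/
import Mathlib


/-- one step of the inverse LMCA recovers C^(T-k+1). -/
theorem stmt1 (r s c k : ℕ) (hk : 1 ≤ k)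
    (f : ℕ → (((ZMod r × ZMod s) → ZMod c) → ((ZMod r × ZMod s) → ZMod c)))
    (hfk : f (k - 1) = id)
    (C : ℕ → (ZMod r × ZMod s) → ZMod c)
    (hrec : ∀ t, C (t + k) = ∑ m ∈ Finset.range k, f m (C (t + (k - 1) - m)))
    (T : ℕ) (hT : k - 1 ≤ T)
    (D : ℕ → (ZMod r × ZMod s) → ZMod c)
    (hinit : ∀ j, 1 ≤ j → j ≤ k → D j = C (T + 2 - j))
    (hstep : D (k + 1)
      = -(∑ m ∈ Finset.range (k - 1), f (k - m - 2) (D (k - m))) + D 1) :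
    D (k + 1) = C (T + 1 - k) := by
  have hC : C (T + 1) = (∑ m ∈ Finset.range (k - 1), f m (C (T - m))) + C (T + 1 - k) := by
    have h := hrec (T + 1 - k)
    have e1 : T + 1 - k + k = T + 1 := by omega
    have e2 : ∀ m : ℕ, T + 1 - k + (k - 1) - m = T - m := by intro m; omega
    rw [e1] at h
    simp only [e2] at h
    rw [h]
    obtain ⟨k', rfl⟩ : ∃ k', k = k' + 1 := ⟨k - 1, by omega⟩
    rw [Finset.sum_range_succ]
    simp only [Nat.add_sub_cancel] at hfk ⊢
    rw [hfk]
    simp only [id]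
    have : T - k' = T + 1 - (k' + 1) := by omega
    rw [this]
  rw [hstep]
  have hD1 : D 1 = C (T + 1) := by
    rw [hinit 1 le_rfl hk]
    norm_num
  have hsum : ∑ m ∈ Finset.range (k - 1), f (k - m - 2) (D (k - m))
      = ∑ m ∈ Finset.range (k - 1), f m (C (T - m)) := by
    rw [← Finset.sum_range_reflect (fun m => f m (C (T - m))) (k - 1)]
    apply Finset.sum_congr rfl
    intro m hm
    simp only [Finset.mem_range] at hm
    have h1 : k - m - 2 = k - 1 - 1 - m := by omega
    have h2 : T + 2 - (k - m) = T - (k - 1 - 1 - m) := by omega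
    rw [h1, hinit (k - m) (by omega) (by omega), h2]
  rw [hsum, hD1, hC]
  abel
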